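/- (Proposition 2, linear tail) For every time t ∈ {0,…,T−1}, if y ≥ (T−t)·v̄ then for every ε > 0 the value function satisfies V_t(y + ε, r, π_t) = V_t(y, r, π_t) − γ·ε; that is, V_t(·, r, π_t) is affine with slope −γ on [(T−t)·v̄, ∞). -/

import Mathlib

open MeasureTheory Set

/-- NEM X payment for net consumption `z` with buy price `pp` and sell price `pm`. -/
noncomputable def NEMPayment (pp pm z : ℝ) : ℝ := pp * max z 0 - pm * max (-z) 0

/-- The superdifferential of a function `f : ℝ → ℝ` (viewed as a concave function
on `[0, ∞)`) at a point `y`. -/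
def superdiff (f : ℝ → ℝ) (y : ℝ) : Set ℝ :=
  {s | ∀ z, 0 ≤ z → f z ≤ f y + s * (z - y)}

/-- Data of the EV-charging / flexible-consumption dynamic program over horizon
`{0, …, T-1}` with `K` flexible loads, under NEM time-of-use prices. -/
structure EVModel (K T : ℕ) (Ω : Type) [MeasurableSpace Ω] where
  /-- underlying probability measure -/
  μ : Measure Ω
  prob : IsProbabilityMeasure μ
  /-- consumption upper bounds -/
  dbar : Fin K → ℝ
  dbar_pos : ∀ i, 0 < dbar i
  /-- device utility functions -/
  U : Fin K → ℝ → ℝ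
  U_strictConcave : ∀ i, StrictConcaveOn ℝ (Icc 0 (dbar i)) (U i)
  U_strictMono : ∀ i, StrictMonoOn (U i) (Icc 0 (dbar i))
  U_diff : ∀ i, ∀ x ∈ Icc 0 (dbar i), DifferentiableWithinAt ℝ (U i) (Icc 0 (dbar i)) x
  U_contDeriv : ∀ i, ContinuousOn (fun x => derivWithin (U i) (Icc 0 (dbar i)) x) (Icc 0 (dbar i))
  U_zero : ∀ i, U i 0 = 0
  /-- renewable processes -/
  r : ℕ → Ω → ℝ
  r_meas : ∀ t, Measurable (r t)
  r_nonneg : ∀ t ω, 0 ≤ r t ω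
  r_int : ∀ t, Integrable (r t) μ
  r_indep : ProbabilityTheory.iIndepFun r μ
  /-- time-of-use buy prices `π_t⁺` -/
  pip : ℕ → ℝ
  /-- time-of-use sell prices `π_t⁻` -/
  pim : ℕ → ℝ
  /-- maximal per-period EV charge -/
  vbar : ℝ
  vbar_pos : 0 < vbar
  /-- per-unit penalty for unmet EV demand at the horizon -/
  γ : ℝ
  /-- `π_off⁻ = min_t π_t⁻` -/
  pioff : ℝ
  pioff_le : ∀ t < T, pioff ≤ pim t
  pioff_attained : ∃ t < T, pioff = pim t
  /-- assumption A1 -/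
  A1 : ∀ t < T, 0 < pim t ∧ pim t ≤ pip t ∧ pip t < γ

namespace EVModel

variable {K T : ℕ} {Ω : Type} [MeasurableSpace Ω]

/-- Stage reward `g_t(x_t, v, d)`. -/
noncomputable def stage (M : EVModel K T Ω) (t : ℕ) (rt v : ℝ) (d : Fin K → ℝ) : ℝ :=
  ∑ i, M.U i (d i) - NEMPayment (M.pip t) (M.pim t) (v + ∑ i, d i - rt)

/-- Feasible decisions `(v, d)` given remaining demand `y`. -/
def feas (M : EVModel K T Ω) (y : ℝ) : Set (ℝ × (Fin K → ℝ)) :=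
  {p | p.1 ∈ Icc 0 (min M.vbar y) ∧ ∀ i, p.2 i ∈ Icc 0 (M.dbar i)}

/-- Value function indexed by `k = T - 1 - t`, the number of remaining periods after
the current one. -/
noncomputable def W (M : EVModel K T Ω) : ℕ → ℝ → ℝ → ℝ
  | 0 => fun y rt => sSup ((fun p : ℝ × (Fin K → ℝ) =>
      M.stage (T - 1) rt p.1 p.2 - M.γ * (y - p.1)) '' M.feas y)
  | (k + 1) => fun y rt => sSup ((fun p : ℝ × (Fin K → ℝ) =>
      M.stage (T - 2 - k) rt p.1 p.2 +
        ∫ ω, M.W k (y - p.1) (M.r (T - 1 - k) ω) ∂M.μ) '' M.feas y)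

/-- Value function `V_t(y, r_t)` (the price argument is determined by `t`). -/
noncomputable def V (M : EVModel K T Ω) (t : ℕ) (y rt : ℝ) : ℝ := M.W (T - 1 - t) y rt

/-- Expected value function `V̄_t(y) = E[V_t(y, r_t, π_t)]`. -/
noncomputable def Vbar (M : EVModel K T Ω) (t : ℕ) (y : ℝ) : ℝ := ∫ ω, M.V t y (M.r t ω) ∂M.μ

/-- Objective of the Bellman equation at time `t` in state `(y, rt)`. -/
noncomputable def bellObj (M : EVModel K T Ω) (t : ℕ) (y rt : ℝ) (p : ℝ × (Fin K → ℝ)) : ℝ :=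
  if t = T - 1 then M.stage t rt p.1 p.2 - M.γ * (y - p.1)
  else M.stage t rt p.1 p.2 + ∫ ω, M.V (t + 1) (y - p.1) (M.r (t + 1) ω) ∂M.μ

/-- `(v, d)` is an optimal solution of the Bellman equation at time `t`. -/
def IsBellmanOpt (M : EVModel K T Ω) (t : ℕ) (y rt : ℝ) (p : ℝ × (Fin K → ℝ)) : Prop :=
  p ∈ M.feas y ∧ ∀ q ∈ M.feas y, M.bellObj t y rt q ≤ M.bellObj t y rt p

/-- Superdifferential `h_t` of the concave expected value function `V̄_t`. -/
noncomputable def h (M : EVModel K T Ω) (t : ℕ) (y : ℝ) : Set ℝ := superdiff (M.Vbar t) y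

end EVModel

/-!
Once the remaining demand `y` is at least `(T - t) v̄`, it can never be met before the horizon,
so every unit not charged now is eventually paid for at the penalty `γ`. Hence each period's
problem is the same for all such `y` (the constraint `v ≤ min v̄ y` is just `v ≤ v̄`), with the
charge `v` rewarded at rate `γ`, and by backward induction `V_t(y, r) = G_t(r) + κ_t - γ y` on
that range. The induction has to integrate `G_{t+1}(r_{t+1})`; this is legitimate because
`G_{t+1}` is Lipschitz, the NEM payment being Lipschitz in the renewable output.
-/

lemma abs_NEMPayment_sub_le {pp pm : ℝ} (hpp : 0 ≤ pp) (hpm : 0 ≤ pm) (z z' : ℝ) :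
    |NEMPayment pp pm z - NEMPayment pp pm z'| ≤ (pp + pm) * |z - z'| := by
  have hpos : |max z 0 - max z' 0| ≤ |z - z'| := abs_max_sub_max_le_abs z z' 0
  have hneg : |max (-z) 0 - max (-z') 0| ≤ |z - z'| := by
    have := abs_max_sub_max_le_abs (-z) (-z') 0
    rwa [show -z - -z' = -(z - z') by ring, abs_neg] at this
  calc |NEMPayment pp pm z - NEMPayment pp pm z'|
      = |pp * (max z 0 - max z' 0) - pm * (max (-z) 0 - max (-z') 0)| := by
        unfold NEMPayment; ring_nf
    _ ≤ pp * |max z 0 - max z' 0| + pm * |max (-z) 0 - max (-z') 0| := by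
        refine (abs_sub _ _).trans_eq ?_
        rw [abs_mul, abs_mul, abs_of_nonneg hpp, abs_of_nonneg hpm]
    _ ≤ (pp + pm) * |z - z'| := by nlinarith

lemma csSup_image_add_const {α : Type*} {S : Set α} (f : α → ℝ) (hS : S.Nonempty)
    (hf : BddAbove (f '' S)) (a : ℝ) :
    sSup ((fun x => f x + a) '' S) = sSup (f '' S) + a := by
  rw [← image_image (· + a) f S]
  exact ((OrderIso.addRight a).map_csSup' (hS.image f) hf).symm

lemma LipschitzWith.integrable_comp {Ω E F : Type*} [MeasurableSpace Ω] {μ : Measure Ω}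
    [IsFiniteMeasure μ] [NormedAddCommGroup E] [NormedAddCommGroup F] {K : NNReal} {g : E → F}
    (hg : LipschitzWith K g) {X : Ω → E} (hX : Integrable X μ) :
    Integrable (fun ω => g (X ω)) μ := by
  refine ((integrable_const ‖g 0‖).add (hX.norm.const_mul K)).mono'
    (hg.continuous.comp_aestronglyMeasurable hX.1) (ae_of_all _ fun ω => ?_)
  have h := hg.dist_le_mul (X ω) 0
  rw [dist_zero_right] at h
  have := norm_le_norm_add_norm_sub' (g (X ω)) (g 0)
  rw [← dist_eq_norm] at this
  simp only [Pi.add_apply]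
  linarith

namespace EVModel

variable {K T : ℕ} {Ω : Type} [MeasurableSpace Ω] (M : EVModel K T Ω)

/-- The `G_s` above: the stage problem with every unit of charge credited at the penalty `γ`. -/
noncomputable def tailReward (s : ℕ) (rt : ℝ) : ℝ :=
  sSup ((fun p : ℝ × (Fin K → ℝ) => M.stage s rt p.1 p.2 + M.γ * p.1) '' M.feas M.vbar)

lemma feas_eq_feas_vbar {c : ℝ} (hc : M.vbar ≤ c) : M.feas c = M.feas M.vbar := by
  simp only [feas, min_eq_left hc, min_self]

lemma zero_mem_feas {c : ℝ} (hc : 0 ≤ c) : ((0 : ℝ), (0 : Fin K → ℝ)) ∈ M.feas c :=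
  ⟨⟨le_rfl, le_min M.vbar_pos.le hc⟩, fun i => ⟨le_rfl, (M.dbar_pos i).le⟩⟩

lemma stage_le {s : ℕ} (hs : s < T) (rt : ℝ) {v : ℝ} {d : Fin K → ℝ} (hv : 0 ≤ v)
    (hd : ∀ i, d i ∈ Icc 0 (M.dbar i)) :
    M.stage s rt v d ≤ ∑ i, M.U i (M.dbar i) + M.pim s * max rt 0 := by
  obtain ⟨hpim, hpip, -⟩ := M.A1 s hs
  have hU : ∑ i, M.U i (d i) ≤ ∑ i, M.U i (M.dbar i) :=
    Finset.sum_le_sum fun i _ =>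
      (M.U_strictMono i).monotoneOn (hd i) ⟨(M.dbar_pos i).le, le_rfl⟩ (hd i).2
  have hsold : max (-(v + ∑ i, d i - rt)) 0 ≤ max rt 0 :=
    max_le_max_right 0 (by linarith [Finset.sum_nonneg fun i (_ : i ∈ Finset.univ) => (hd i).1])
  have hbought : 0 ≤ M.pip s * max (v + ∑ i, d i - rt) 0 :=
    mul_nonneg (by linarith) (le_max_right _ _)
  simp only [stage, NEMPayment]
  nlinarith [mul_le_mul_of_nonneg_left hsold hpim.le]

lemma stage_le_stage_add_dist {s : ℕ} (hs : s < T) (a b v : ℝ) (d : Fin K → ℝ) :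
    M.stage s a v d ≤ M.stage s b v d + (M.pip s + M.pim s) * dist a b := by
  obtain ⟨hpim, hpip, -⟩ := M.A1 s hs
  have h := abs_NEMPayment_sub_le (by linarith : 0 ≤ M.pip s) hpim.le
    (v + ∑ i, d i - b) (v + ∑ i, d i - a)
  rw [show v + ∑ i, d i - b - (v + ∑ i, d i - a) = a - b by ring] at h
  simp only [stage, Real.dist_eq]
  linarith [le_of_abs_le h]

lemma bddAbove_tailObj {s : ℕ} (hs : s < T) (rt : ℝ) :
    BddAbove ((fun p : ℝ × (Fin K → ℝ) => M.stage s rt p.1 p.2 + M.γ * p.1) '' M.feas M.vbar) := by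
  have hγ : 0 ≤ M.γ := by linarith [M.A1 s hs]
  refine ⟨∑ i, M.U i (M.dbar i) + M.pim s * max rt 0 + M.γ * M.vbar, ?_⟩
  rintro _ ⟨p, ⟨⟨hv0, hv⟩, hd⟩, rfl⟩
  have := mul_le_mul_of_nonneg_left (hv.trans (min_le_left _ _)) hγ
  linarith [M.stage_le hs rt hv0 hd]

lemma lipschitzWith_tailReward {s : ℕ} (hs : s < T) :
    LipschitzWith (M.pip s + M.pim s).toNNReal (M.tailReward s) := by
  refine LipschitzWith.of_le_add_mul' _ fun a b => ?_
  unfold tailReward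
  refine csSup_le ((nonempty_of_mem (M.zero_mem_feas M.vbar_pos.le)).image _) ?_
  rintro _ ⟨p, hp, rfl⟩
  have := le_csSup (M.bddAbove_tailObj hs b) (mem_image_of_mem _ hp)
  linarith [M.stage_le_stage_add_dist hs a b p.1 p.2]

lemma W_eq_tailReward_sub (hT : 0 < T) (k : ℕ) :
    ∃ κ : ℝ, ∀ c, ((k : ℝ) + 1) * M.vbar ≤ c → ∀ rt,
      M.W k c rt = M.tailReward (T - 1 - k) rt + κ - M.γ * c := by
  have hne : (M.feas M.vbar).Nonempty := ⟨_, M.zero_mem_feas M.vbar_pos.le⟩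
  have hvbar_le {c : ℝ} {n : ℕ} (hc : ((n : ℝ) + 1) * M.vbar ≤ c) : M.vbar ≤ c := by
    nlinarith [M.vbar_pos, (Nat.cast_nonneg n : (0 : ℝ) ≤ n)]
  induction k with
  | zero =>
    refine ⟨0, fun c hc rt => ?_⟩
    simp only [W]
    rw [M.feas_eq_feas_vbar (hvbar_le hc), Nat.sub_zero, add_zero, sub_eq_add_neg, tailReward,
      ← csSup_image_add_const _ hne (M.bddAbove_tailObj (by omega) rt)]
    exact congrArg sSup (image_congr fun p _ => by ring)
  | succ k ih =>
    obtain ⟨κ, hκ⟩ := ih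
    have := M.prob
    set G := M.tailReward (T - 1 - k)
    set E := ∫ ω, G (M.r (T - 1 - k) ω) ∂M.μ
    have hG : Integrable (fun ω => G (M.r (T - 1 - k) ω)) M.μ :=
      (M.lipschitzWith_tailReward (by omega)).integrable_comp (M.r_int _)
    refine ⟨E + κ, fun c hc rt => ?_⟩
    have hvc := hvbar_le hc
    push_cast at hc
    have hobj : ∀ p ∈ M.feas M.vbar,
        M.stage (T - 2 - k) rt p.1 p.2 + ∫ ω, M.W k (c - p.1) (M.r (T - 1 - k) ω) ∂M.μ
          = M.stage (T - 2 - k) rt p.1 p.2 + M.γ * p.1 + (E + κ - M.γ * c) := by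
      rintro p ⟨⟨-, hv⟩, -⟩
      have hcv : ((k : ℝ) + 1) * M.vbar ≤ c - p.1 := by
        linarith [hv.trans (min_le_left _ _)]
      simp_rw [hκ _ hcv]
      rw [integral_sub, integral_add hG (integrable_const κ)]
      · simp only [integral_const, probReal_univ, one_smul]
        ring
      exacts [hG.add (integrable_const κ), integrable_const _]
    simp only [W]
    rw [M.feas_eq_feas_vbar hvc, image_congr hobj,
      csSup_image_add_const _ hne (M.bddAbove_tailObj (by omega) rt),
      show T - 1 - (k + 1) = T - 2 - k by omega, tailReward]
    ring

end EVModel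

theorem prop2_linear_tail_general (K T : ℕ) (Ω : Type) [MeasurableSpace Ω]
    (M : EVModel K T Ω) (t : ℕ) (ht : t < T) (rt : ℝ)
    (y : ℝ) (hy : ((T - t : ℕ) : ℝ) * M.vbar ≤ y) :
    ∀ ε : ℝ, 0 < ε → M.V t (y + ε) rt = M.V t y rt - M.γ * ε := by
  intro ε hε
  obtain ⟨κ, hκ⟩ := M.W_eq_tailReward_sub (by omega) (T - 1 - t)
  have hk : (((T - 1 - t : ℕ) : ℝ) + 1) * M.vbar ≤ y := by
    rwa [← Nat.cast_add_one, show T - 1 - t + 1 = T - t by omega]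
  have hkε : (((T - 1 - t : ℕ) : ℝ) + 1) * M.vbar ≤ y + ε := by linarith
  rw [EVModel.V, EVModel.V, hκ y hk, hκ (y + ε) hkε]
  ring

/-- **Proposition 2 (linear tail).**
For every `t ∈ {0, …, T-1}`, if `y ≥ (T - t) v̄` then for every `ε > 0`,
`V_t(y + ε, r, π_t) = V_t(y, r, π_t) - γ ε`; i.e. `V_t(·, r, π_t)` is affine with
slope `-γ` on `[(T - t) v̄, ∞)`. -/
theorem prop2_linear_tail (K T : ℕ) (Ω : Type) [MeasurableSpace Ω]
    (M : EVModel K T Ω) (t : ℕ) (ht : t < T) (rt : ℝ) (hrt : 0 ≤ rt)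
    (y : ℝ) (hy : ((T - t : ℕ) : ℝ) * M.vbar ≤ y) :
    ∀ ε : ℝ, 0 < ε → M.V t (y + ε) rt = M.V t y rt - M.γ * ε :=
  prop2_linear_tail_general K T Ω M t ht rt y hy
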